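/- (Per-iteration contraction of AltGDmin under the paper's Temporary Assumption.) Let U* and U be real n×r matrices with orthonormal columns, P := I − U*(U*)ᵀ, δ := ‖P U‖. Let B, B* be real r×q matrices, grad a real n×r matrix, and E := (U B − U* B*) Bᵀ. Let σ_min > 0, κ ≥ 1, σ_max := κ·σ_min, and let constants satisfy 0 < c_η, 0 < c₁ ≤ 0.2, C₂ > 0; set the step size η := c_η/σ_max². Assume: (i) η‖B‖² ≤ 0.9; (ii) λ_min(B Bᵀ) ≥ 0.9·σ_min²; (iii) ‖grad − E‖ ≤ c₁·δ·σ_min²; (iv) ‖E‖ ≤ C₂·κ²·δ·σ_min²; (v) (2C₂κ² + 2c₁)·δ ≤ 0.1; (vi) 0 < δ < 1/2; (vii) η(‖E‖ + ‖grad − E‖) < 1/2. Then, if U − η·grad = U⁺ R⁺ is a QR decomposition with U⁺ having orthonormal columns and R⁺ invertible, ‖(I − U*(U*)ᵀ) U⁺‖ ≤ (1 − (0.8 − c₁)·c_η/κ²)·δ. -/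

import Mathlib

/-!
Since `P U* = 0`, the projected error satisfies `P E = P U (B Bᵀ)`, so
`P (U - η grad) = P U (I - η B Bᵀ) - η P (grad - E)`. The symmetric matrix `I - η B Bᵀ` has its
quadratic form in `[0, 1 - η λ_min(B Bᵀ)]`, which bounds the numerator by
`(1 - 0.9 c_η/κ²) δ + c₁ (c_η/κ²) δ`. For the denominator, `U - η grad = U⁺ R⁺` is within
`η ‖grad‖ ≤ 0.05 c_η/κ²` of the isometry `U`, so `(R⁺)⁻¹` has norm at most `1 / (1 - η ‖grad‖)`
and `‖P U⁺‖ = ‖P (U - η grad) (R⁺)⁻¹‖` is at most the quotient of the two bounds.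
-/

open Matrix
open scoped RealInnerProductSpace

/-- Spectral norm (operator norm induced by the Euclidean norm) of a real matrix. -/
noncomputable def specNorm {m n : ℕ} (M : Matrix (Fin m) (Fin n) ℝ) : ℝ :=
  ‖LinearMap.toContinuousLinearMap (Matrix.toEuclideanLin M)‖

/-- Smallest eigenvalue of a (symmetric) square matrix, via the Rayleigh quotient:
minimum of `⟪x, M x⟫` over unit vectors `x`. -/
noncomputable def lambdaMin {n : ℕ} (M : Matrix (Fin n) (Fin n) ℝ) : ℝ :=
  ⨅ x : Metric.sphere (0 : EuclideanSpace ℝ (Fin n)) 1,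
    ⟪(x : EuclideanSpace ℝ (Fin n)),
      Matrix.toEuclideanLin M (x : EuclideanSpace ℝ (Fin n))⟫

open scoped Matrix.Norms.L2Operator

lemma ContinuousLinearMap.norm_le_of_abs_inner_le {E : Type*} [NormedAddCommGroup E]
    [InnerProductSpace ℝ E] {T : E →L[ℝ] E} (hT : (T : E →ₗ[ℝ] E).IsSymmetric) {c : ℝ}
    (hc : 0 ≤ c) (h : ∀ x, |⟪T x, x⟫| ≤ c * ‖x‖ ^ 2) : ‖T‖ ≤ c := by
  rw [T.norm_eq_iSup_rayleighQuotient hT]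
  refine ciSup_le fun x => ?_
  rcases eq_or_ne x 0 with rfl | hx
  · simpa using hc
  rw [rayleighQuotient, reApplyInnerSelf_apply, abs_div, abs_sq,
    div_le_iff₀ (by positivity)]
  simpa using h x

namespace Matrix

lemma norm_toEuclideanLin_le {m n : Type*} [Fintype m] [Fintype n] [DecidableEq n]
    (A : Matrix m n ℝ) (x : EuclideanSpace ℝ n) : ‖toEuclideanLin A x‖ ≤ ‖A‖ * ‖x‖ :=
  ((toEuclideanLin.trans LinearMap.toContinuousLinearMap) A).le_opNorm x

lemma inner_toEuclideanLin_transpose {m n : Type*} [Fintype m] [Fintype n] [DecidableEq m]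
    [DecidableEq n] (A : Matrix m n ℝ) (x : EuclideanSpace ℝ m) (y : EuclideanSpace ℝ n) :
    ⟪toEuclideanLin Aᵀ x, y⟫ = ⟪x, toEuclideanLin A y⟫ := by
  rw [← conjTranspose_eq_transpose_of_trivial, toEuclideanLin_conjTranspose_eq_adjoint,
    LinearMap.adjoint_inner_left]

lemma norm_toEuclideanLin_of_transpose_mul_self {m n : Type*} [Fintype m] [Fintype n]
    [DecidableEq m] [DecidableEq n] {U : Matrix m n ℝ} (hU : Uᵀ * U = 1)
    (x : EuclideanSpace ℝ n) : ‖toEuclideanLin U x‖ = ‖x‖ := by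
  have h : ⟪toEuclideanLin U x, toEuclideanLin U x⟫ = ⟪x, x⟫ := by
    rw [← inner_toEuclideanLin_transpose, ← LinearMap.comp_apply, ← toLpLin_mul_same, hU]
    simp
  simpa [real_inner_self_eq_norm_sq] using h

lemma abs_inner_toEuclideanLin_self_le {n : Type*} [Fintype n] [DecidableEq n]
    (M : Matrix n n ℝ) (x : EuclideanSpace ℝ n) :
    |⟪x, toEuclideanLin M x⟫| ≤ ‖M‖ * ‖x‖ ^ 2 :=
  calc |⟪x, toEuclideanLin M x⟫| ≤ ‖x‖ * ‖toEuclideanLin M x‖ := abs_real_inner_le_norm _ _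
    _ ≤ ‖x‖ * (‖M‖ * ‖x‖) := by gcongr; exact norm_toEuclideanLin_le M x
    _ = ‖M‖ * ‖x‖ ^ 2 := by ring

lemma l2_opNorm_mul_transpose_self {m n : Type*} [Fintype m] [Fintype n] [DecidableEq m]
    [DecidableEq n] (B : Matrix m n ℝ) : ‖B * Bᵀ‖ = ‖B‖ ^ 2 := by
  simpa [sq, ← conjTranspose_eq_transpose_of_trivial, l2_opNorm_conjTranspose] using
    l2_opNorm_conjTranspose_mul_self Bᵀ

lemma l2_opNorm_one_sub_mul_transpose_le_one {m n : Type*} [Fintype m] [Fintype n]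
    [DecidableEq m] [DecidableEq n] {U : Matrix m n ℝ} (hU : Uᵀ * U = 1) :
    ‖1 - U * Uᵀ‖ ≤ 1 := by
  have hP : (1 - U * Uᵀ)ᴴ * (1 - U * Uᵀ) = 1 - U * Uᵀ := by
    rw [conjTranspose_eq_transpose_of_trivial]
    simp only [transpose_sub, transpose_one, transpose_mul, transpose_transpose, sub_mul, mul_sub,
      one_mul, mul_one, Matrix.mul_assoc, ← Matrix.mul_assoc Uᵀ U, hU, Matrix.one_mul]
    abel
  have h := l2_opNorm_conjTranspose_mul_self (1 - U * Uᵀ)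
  rw [hP] at h
  nlinarith [norm_nonneg (1 - U * Uᵀ)]

lemma l2_opNorm_one_sub_le {n : Type*} [Fintype n] [DecidableEq n] {M : Matrix n n ℝ}
    (hM : M.IsHermitian) (hM1 : ‖M‖ ≤ 1) {lo : ℝ} (hlo1 : lo ≤ 1)
    (hlo : ∀ x, lo * ‖x‖ ^ 2 ≤ ⟪x, toEuclideanLin M x⟫) : ‖1 - M‖ ≤ 1 - lo := by
  rw [cstar_norm_def]
  refine ContinuousLinearMap.norm_le_of_abs_inner_le ?_ (by linarith) fun x => ?_
  · rw [coe_toEuclideanCLM_eq_toEuclideanLin, isSymmetric_toEuclideanLin_iff]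
    exact isHermitian_one.sub hM
  have hx : toEuclideanCLM (n := n) (𝕜 := ℝ) (1 - M) x = x - toEuclideanLin M x := by
    rw [map_sub, map_one]; rfl
  have hup := (le_abs_self _).trans (abs_inner_toEuclideanLin_self_le M x)
  rw [hx, inner_sub_left, real_inner_self_eq_norm_sq, real_inner_comm, abs_le]
  have := hlo x
  constructor <;> nlinarith [sq_nonneg ‖x‖]

lemma mul_norm_le_norm_toEuclideanLin_sub {m n : Type*} [Fintype m] [Fintype n]
    [DecidableEq m] [DecidableEq n] {U : Matrix m n ℝ} (hU : Uᵀ * U = 1) (G : Matrix m n ℝ)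
    (x : EuclideanSpace ℝ n) : (1 - ‖G‖) * ‖x‖ ≤ ‖toEuclideanLin (U - G) x‖ := by
  have h := norm_sub_norm_le (toEuclideanLin U x) (toEuclideanLin G x)
  rw [norm_toEuclideanLin_of_transpose_mul_self hU, ← LinearMap.sub_apply, ← map_sub] at h
  nlinarith [norm_toEuclideanLin_le G x]

lemma l2_opNorm_mul_le_div_of_eq_mul {k m n : Type*} [Fintype k] [Fintype m] [Fintype n]
    [DecidableEq m] [DecidableEq n] {M : Matrix k m ℝ} {A Q : Matrix m n ℝ} {R : Matrix n n ℝ}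
    (hA : A = Q * R) (hQ : Qᵀ * Q = 1) (hR : IsUnit R) {c : ℝ} (hc : 0 < c)
    (hlow : ∀ x, c * ‖x‖ ≤ ‖toEuclideanLin A x‖) : ‖M * Q‖ ≤ ‖M * A‖ / c := by
  obtain ⟨R, rfl⟩ := hR
  have hQA : Q = A * (↑R⁻¹ : Matrix n n ℝ) := by
    rw [hA, Matrix.mul_assoc, Units.mul_inv, Matrix.mul_one]
  refine ((toEuclideanLin.trans LinearMap.toContinuousLinearMap) (M * Q)).opNorm_le_bound
    (div_nonneg (norm_nonneg _) hc.le) fun y => ?_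
  set x := toEuclideanLin (↑R⁻¹ : Matrix n n ℝ) y
  have hx : c * ‖x‖ ≤ ‖y‖ := by
    rw [← norm_toEuclideanLin_of_transpose_mul_self hQ y, hQA, toLpLin_mul_same,
      LinearMap.comp_apply]
    exact hlow x
  have hMQ : toEuclideanLin (M * Q) y = toEuclideanLin (M * A) x := by
    rw [hQA, ← Matrix.mul_assoc, toLpLin_mul_same, LinearMap.comp_apply]
  calc ‖toEuclideanLin (M * Q) y‖ = ‖toEuclideanLin (M * A) x‖ := by rw [hMQ]
    _ ≤ ‖M * A‖ * ‖x‖ := norm_toEuclideanLin_le _ _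
    _ ≤ ‖M * A‖ * (‖y‖ / c) := by gcongr; rwa [le_div_iff₀' hc]
    _ = ‖M * A‖ / c * ‖y‖ := by ring

lemma mul_sub_smul_eq_of_mul_eq_zero {R : Type*} [CommRing R] {k n r r' q : Type*} [Fintype n]
    [Fintype r] [Fintype r'] [Fintype q] [DecidableEq r] {P : Matrix k n R}
    {U grad E : Matrix n r R} {Ustar : Matrix n r' R} {B : Matrix r q R} {Bstar : Matrix r' q R}
    (hPU : P * Ustar = 0) (hE : E = (U * B - Ustar * Bstar) * Bᵀ) (η : R) :
    P * (U - η • grad) = P * U * (1 - η • (B * Bᵀ)) - η • (P * (grad - E)) := by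
  have hPE : P * E = P * U * (B * Bᵀ) := by
    rw [hE, Matrix.sub_mul, Matrix.mul_sub, Matrix.mul_assoc Ustar, ← Matrix.mul_assoc P Ustar,
      hPU, Matrix.zero_mul, sub_zero, Matrix.mul_assoc, Matrix.mul_assoc]
  rw [Matrix.mul_sub, Matrix.mul_sub, Matrix.mul_one, Matrix.mul_smul, Matrix.mul_smul,
    Matrix.mul_sub, ← hPE, smul_sub]
  abel

lemma l2_opNorm_mul_sub_smul_le {k n r r' q : Type*} [Fintype k] [Fintype n] [Fintype r]
    [Fintype r'] [Fintype q] [DecidableEq n] [DecidableEq r] {P : Matrix k n ℝ}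
    {U grad E : Matrix n r ℝ} {Ustar : Matrix n r' ℝ} {B : Matrix r q ℝ} {Bstar : Matrix r' q ℝ}
    (hPU : P * Ustar = 0) (hP : ‖P‖ ≤ 1) (hE : E = (U * B - Ustar * Bstar) * Bᵀ) {η : ℝ}
    (hη : 0 ≤ η) :
    ‖P * (U - η • grad)‖ ≤ ‖P * U‖ * ‖1 - η • (B * Bᵀ)‖ + η * ‖grad - E‖ := by
  rw [mul_sub_smul_eq_of_mul_eq_zero hPU hE]
  calc _ ≤ ‖P * U * (1 - η • (B * Bᵀ))‖ + ‖η • (P * (grad - E))‖ := norm_sub_le _ _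
    _ ≤ ‖P * U‖ * ‖1 - η • (B * Bᵀ)‖ + η * (‖P‖ * ‖grad - E‖) := by
      rw [norm_smul, Real.norm_of_nonneg hη]
      gcongr <;> exact l2_opNorm_mul _ _
    _ ≤ ‖P * U‖ * ‖1 - η • (B * Bᵀ)‖ + η * ‖grad - E‖ := by
      gcongr; exact mul_le_of_le_one_left (norm_nonneg _) hP

end Matrix

lemma specNorm_eq_l2_opNorm {m n : ℕ} (M : Matrix (Fin m) (Fin n) ℝ) : specNorm M = ‖M‖ := rfl

lemma lambdaMin_mul_norm_sq_le {n : ℕ} (M : Matrix (Fin n) (Fin n) ℝ)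
    (x : EuclideanSpace ℝ (Fin n)) : lambdaMin M * ‖x‖ ^ 2 ≤ ⟪x, toEuclideanLin M x⟫ := by
  rcases eq_or_ne x 0 with rfl | hx
  · simp
  have hbdd : BddBelow (Set.range fun y : Metric.sphere (0 : EuclideanSpace ℝ (Fin n)) 1 =>
      ⟪(y : EuclideanSpace ℝ (Fin n)), toEuclideanLin M y⟫) := by
    refine ⟨-‖M‖, ?_⟩
    rintro _ ⟨⟨y, hy⟩, rfl⟩
    have hy1 : ‖y‖ = 1 := by simpa using hy
    have := abs_le.mp (abs_inner_toEuclideanLin_self_le M y)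
    simp only [hy1, one_pow, mul_one] at this
    exact this.1
  have hx0 : 0 < ‖x‖ := norm_pos_iff.mpr hx
  have hu : ‖x‖⁻¹ • x ∈ Metric.sphere (0 : EuclideanSpace ℝ (Fin n)) 1 := by
    simp [norm_smul, hx0.ne']
  have h : lambdaMin M ≤ ⟪‖x‖⁻¹ • x, toEuclideanLin M (‖x‖⁻¹ • x)⟫ := ciInf_le hbdd ⟨_, hu⟩
  rw [map_smul, real_inner_smul_left, real_inner_smul_right] at h
  calc lambdaMin M * ‖x‖ ^ 2 ≤ ‖x‖⁻¹ * (‖x‖⁻¹ * ⟪x, toEuclideanLin M x⟫) * ‖x‖ ^ 2 := by gcongr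
    _ = ⟪x, toEuclideanLin M x⟫ := by field_simp

lemma lambdaMin_le_l2_opNorm {n : ℕ} (M : Matrix (Fin n) (Fin n) ℝ) : lambdaMin M ≤ ‖M‖ := by
  rcases isEmpty_or_nonempty (Metric.sphere (0 : EuclideanSpace ℝ (Fin n)) 1) with h | ⟨⟨x, hx⟩⟩
  · -- `n = 0`: the infimum over the empty sphere is `0`
    rw [lambdaMin, Real.iInf_of_isEmpty]
    exact norm_nonneg M
  have hx1 : ‖x‖ = 1 := by simpa using hx
  simpa [hx1] using (lambdaMin_mul_norm_sq_le M x).trans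
    (le_abs_self _ |>.trans (abs_inner_toEuclideanLin_self_le M x))

lemma l2_opNorm_one_sub_smul_mul_transpose_le {r q : ℕ} (B : Matrix (Fin r) (Fin q) ℝ) {η : ℝ}
    (hη : 0 ≤ η) (hB : η * ‖B‖ ^ 2 ≤ 1) :
    ‖1 - η • (B * Bᵀ)‖ ≤ 1 - η * lambdaMin (B * Bᵀ) := by
  refine l2_opNorm_one_sub_le ?_ ?_ ?_ fun x => ?_
  · simpa using (isHermitian_mul_conjTranspose_self B).smul (IsSelfAdjoint.all η)
  · rwa [norm_smul, Real.norm_of_nonneg hη, l2_opNorm_mul_transpose_self]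
  · calc η * lambdaMin (B * Bᵀ) ≤ η * ‖B * Bᵀ‖ := by gcongr; exact lambdaMin_le_l2_opNorm _
      _ ≤ 1 := by rwa [l2_opNorm_mul_transpose_self]
  · rw [map_smul, LinearMap.smul_apply, real_inner_smul_right, mul_assoc]
    exact mul_le_mul_of_nonneg_left (lambdaMin_mul_norm_sq_le _ x) hη

lemma contraction_factor_le {d c₁ δ g : ℝ} (hd0 : 0 ≤ d) (hd1 : d ≤ 1) (hc₁ : 0 ≤ c₁)
    (hc₁' : c₁ ≤ 0.2) (hδ : 0 ≤ δ) (hg : g ≤ 0.05 * d) :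
    ((1 - 0.9 * d) * δ + c₁ * d * δ) / (1 - g) ≤ (1 - (0.8 - c₁) * d) * δ := by
  have hg1 : 0 < 1 - g := by linarith
  rw [div_le_iff₀ hg1]
  have hfac : 0 ≤ (1 - (0.8 - c₁) * d) * δ := by
    apply mul_nonneg _ hδ; nlinarith
  calc (1 - 0.9 * d) * δ + c₁ * d * δ
      ≤ (1 - (0.8 - c₁) * d) * δ * (1 - 0.05 * d) := by
        nlinarith [mul_nonneg (mul_nonneg hd0 hd0) hδ]
    _ ≤ (1 - (0.8 - c₁) * d) * δ * (1 - g) := by gcongr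

theorem altGDmin_contraction_general (n r q : ℕ)
    (Ustar U : Matrix (Fin n) (Fin r) ℝ)
    (hU : Uᵀ * U = 1) (hUs : Ustarᵀ * Ustar = 1)
    (B Bstar : Matrix (Fin r) (Fin q) ℝ)
    (grad : Matrix (Fin n) (Fin r) ℝ)
    (P : Matrix (Fin n) (Fin n) ℝ)
    (hP : P = (1 : Matrix (Fin n) (Fin n) ℝ) - Ustar * Ustarᵀ)
    (δ : ℝ) (hδdef : δ = specNorm (P * U))
    (E : Matrix (Fin n) (Fin r) ℝ) (hE : E = (U * B - Ustar * Bstar) * Bᵀ)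
    (σmin κ σmax c_η c₁ C₂ η : ℝ)
    (hσ : 0 < σmin) (hκ : 1 ≤ κ) (hσmax : σmax = κ * σmin)
    (hcη : 0 < c_η) (hc₁ : 0 < c₁) (hc₁' : c₁ ≤ 0.2)
    (hηdef : η = c_η / σmax ^ 2)
    (h1 : η * specNorm B ^ 2 ≤ 0.9)
    (h2 : lambdaMin (B * Bᵀ) ≥ 0.9 * σmin ^ 2)
    (h3 : specNorm (grad - E) ≤ c₁ * δ * σmin ^ 2)
    (h4 : specNorm E ≤ C₂ * κ ^ 2 * δ * σmin ^ 2)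
    (h5 : (2 * C₂ * κ ^ 2 + 2 * c₁) * δ ≤ 0.1) :
    ∀ (Uplus : Matrix (Fin n) (Fin r) ℝ) (Rplus : Matrix (Fin r) (Fin r) ℝ),
      U - η • grad = Uplus * Rplus → Uplusᵀ * Uplus = 1 → IsUnit Rplus →
      specNorm (((1 : Matrix (Fin n) (Fin n) ℝ) - Ustar * Ustarᵀ) * Uplus) ≤
        (1 - (0.8 - c₁) * c_η / κ ^ 2) * δ := by
  intro Uplus Rplus hQR hUplus hR
  simp only [specNorm_eq_l2_opNorm] at hδdef h1 h3 h4 ⊢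
  rw [← hP, mul_div_assoc]
  have hη : 0 ≤ η := by rw [hηdef]; positivity
  have hδ : 0 ≤ δ := hδdef ▸ norm_nonneg _
  set d := c_η / κ ^ 2 with hd_def
  have hd : η * σmin ^ 2 = d := by
    rw [hηdef, hσmax, hd_def]; field_simp
  have hB : 0.9 * σmin ^ 2 ≤ ‖B‖ ^ 2 :=
    h2.le.trans ((lambdaMin_le_l2_opNorm _).trans_eq (l2_opNorm_mul_transpose_self B))
  have hd1 : d ≤ 1 := by linarith [mul_le_mul_of_nonneg_left hB hη]
  have hnum : ‖P * (U - η • grad)‖ ≤ (1 - 0.9 * d) * δ + c₁ * d * δ := by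
    have hPUs : P * Ustar = 0 := by
      rw [hP, Matrix.sub_mul, Matrix.one_mul, Matrix.mul_assoc, hUs, Matrix.mul_one, sub_self]
    calc _ ≤ ‖P * U‖ * ‖1 - η • (B * Bᵀ)‖ + η * ‖grad - E‖ :=
          l2_opNorm_mul_sub_smul_le hPUs (hP ▸ l2_opNorm_one_sub_mul_transpose_le_one hUs) hE hη
      _ ≤ δ * (1 - η * (0.9 * σmin ^ 2)) + η * (c₁ * δ * σmin ^ 2) := by
          rw [← hδdef]
          gcongr
          calc ‖1 - η • (B * Bᵀ)‖ ≤ 1 - η * lambdaMin (B * Bᵀ) :=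
                l2_opNorm_one_sub_smul_mul_transpose_le B hη (by linarith)
            _ ≤ 1 - η * (0.9 * σmin ^ 2) := by gcongr
      _ = _ := by rw [← hd]; ring
  have hgrad : η * ‖grad‖ ≤ 0.05 * d := by
    have hgrad_le : ‖grad‖ ≤ (C₂ * κ ^ 2 + c₁) * δ * σmin ^ 2 := by
      linarith [norm_le_insert' grad E]
    calc η * ‖grad‖ ≤ η * ((C₂ * κ ^ 2 + c₁) * δ * σmin ^ 2) := by gcongr
      _ = (C₂ * κ ^ 2 + c₁) * δ * d := by rw [← hd]; ring
      _ ≤ 0.05 * d := by gcongr; linarith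
  have hlow : ∀ x, (1 - η * ‖grad‖) * ‖x‖ ≤ ‖toEuclideanLin (U - η • grad) x‖ := by
    simpa [norm_smul, abs_of_nonneg hη] using mul_norm_le_norm_toEuclideanLin_sub hU (η • grad)
  calc ‖P * Uplus‖ ≤ ‖P * (U - η • grad)‖ / (1 - η * ‖grad‖) :=
        l2_opNorm_mul_le_div_of_eq_mul hQR hUplus hR (by linarith) hlow
    _ ≤ ((1 - 0.9 * d) * δ + c₁ * d * δ) / (1 - η * ‖grad‖) := by gcongr; linarith
    _ ≤ (1 - (0.8 - c₁) * d) * δ :=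
        contraction_factor_le (hd ▸ by positivity) hd1 hc₁.le hc₁' hδ hgrad

/-- per-iteration contraction of AltGDmin under the paper's
Temporary Assumption. -/
theorem altGDmin_contraction (n r q : ℕ)
    (Ustar U : Matrix (Fin n) (Fin r) ℝ)
    (hU : Uᵀ * U = 1) (hUs : Ustarᵀ * Ustar = 1)
    (B Bstar : Matrix (Fin r) (Fin q) ℝ)
    (grad : Matrix (Fin n) (Fin r) ℝ)
    (P : Matrix (Fin n) (Fin n) ℝ)
    (hP : P = (1 : Matrix (Fin n) (Fin n) ℝ) - Ustar * Ustarᵀ)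
    (δ : ℝ) (hδdef : δ = specNorm (P * U))
    (E : Matrix (Fin n) (Fin r) ℝ) (hE : E = (U * B - Ustar * Bstar) * Bᵀ)
    (σmin κ σmax c_η c₁ C₂ η : ℝ)
    (hσ : 0 < σmin) (hκ : 1 ≤ κ) (hσmax : σmax = κ * σmin)
    (hcη : 0 < c_η) (hc₁ : 0 < c₁) (hc₁' : c₁ ≤ 0.2) (hC₂ : 0 < C₂)
    (hηdef : η = c_η / σmax ^ 2)
    (h1 : η * specNorm B ^ 2 ≤ 0.9)
    (h2 : lambdaMin (B * Bᵀ) ≥ 0.9 * σmin ^ 2)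
    (h3 : specNorm (grad - E) ≤ c₁ * δ * σmin ^ 2)
    (h4 : specNorm E ≤ C₂ * κ ^ 2 * δ * σmin ^ 2)
    (h5 : (2 * C₂ * κ ^ 2 + 2 * c₁) * δ ≤ 0.1)
    (h6 : 0 < δ) (h6' : δ < 1 / 2)
    (h7 : η * (specNorm E + specNorm (grad - E)) < 1 / 2) :
    ∀ (Uplus : Matrix (Fin n) (Fin r) ℝ) (Rplus : Matrix (Fin r) (Fin r) ℝ),
      U - η • grad = Uplus * Rplus → Uplusᵀ * Uplus = 1 → IsUnit Rplus →
      specNorm (((1 : Matrix (Fin n) (Fin n) ℝ) - Ustar * Ustarᵀ) * Uplus) ≤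
        (1 - (0.8 - c₁) * c_η / κ ^ 2) * δ :=
  altGDmin_contraction_general n r q Ustar U hU hUs B Bstar grad P hP δ hδdef E hE σmin κ σmax c_η
    c₁ C₂ η hσ hκ hσmax hcη hc₁ hc₁' hηdef h1 h2 h3 h4 h5
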